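/- (Dinkelbach fixed point) With S nonempty, R ≥ 0, P ≥ c > 0 on S, if q* satisfies sup_{s∈S}(R s - q* P s) = 0 attained at s*, then q* = R s* / P s* and q* = sup_{s∈S} R s / P s. -/
import Mathlib


theorem dinkelbach_fixed_point {S : Type*} [Nonempty S] (R P : S → ℝ)
    (c : ℝ) (hc : 0 < c) (hR : ∀ s, 0 ≤ R s) (hP : ∀ s, c ≤ P s)
    (qstar : ℝ) (sstar : S)
    (hle : ∀ s, R s - qstar * P s ≤ 0)
    (heq : R sstar - qstar * P sstar = 0) :
    qstar = R sstar / P sstar ∧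
      IsGreatest (Set.range fun s => R s / P s) qstar := by
  have hPpos : ∀ s, 0 < P s := fun s => lt_of_lt_of_le hc (hP s)
  have hq : qstar = R sstar / P sstar := by
    have h := hPpos sstar
    field_simp
    linarith [heq]
  refine ⟨hq, ⟨⟨sstar, hq.symm⟩, ?_⟩⟩
  rintro x ⟨s, rfl⟩
  have := hle s
  rw [div_le_iff₀ (hPpos s)]
  linarith
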